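/- For every integer n ≥ 3, there is a 2-coloring of the edges of K_{3×(n−1)} containing no matching nK_2 in the first color and no cycle C_7 in the second color; hence m_3(nK_2, C_7) ≥ n. (The coloring takes the first color class isomorphic to K_{n−1,n−1} between two of the parts and the second color class to be the complete bipartite graph K_{n−1,2(n−1)} between the third part and the union of the other two.) -/

import Mathlib

open SimpleGraph

/-- The complete multipartite graph `K_{j x t}` with `j` parts, each of size `t`. -/
def multiK (j t : ℕ) : SimpleGraph (Fin j × Fin t) where
  Adj a b := a.1 ≠ b.1
  symm := ⟨fun _ _ h => Ne.symm h⟩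
  loopless := ⟨fun _ h => h rfl⟩

/-- `G` contains a copy of `H`. -/
def Contains {α β : Type*} (G : SimpleGraph α) (H : SimpleGraph β) : Prop :=
  ∃ f : β → α, Function.Injective f ∧ ∀ ⦃a b⦄, H.Adj a b → G.Adj (f a) (f b)

/-- The monochromatic subgraph of `G` in color `i` under the edge-coloring `c`. -/
def colorClass {α : Type*} {k : ℕ} (G : SimpleGraph α) (c : Sym2 α → Fin k) (i : Fin k) :
    SimpleGraph α where
  Adj a b := G.Adj a b ∧ c s(a, b) = i
  symm := ⟨fun _ _ h => ⟨h.1.symm, by rw [Sym2.eq_swap]; exact h.2⟩⟩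
  loopless := ⟨fun a h => G.ne_of_adj h.1 rfl⟩

/-- The stripe `nK₂`: the graph consisting of `n` pairwise disjoint edges. -/
def stripe (n : ℕ) : SimpleGraph (Fin n × Fin 2) where
  Adj a b := a.1 = b.1 ∧ a.2 ≠ b.2
  symm := ⟨fun _ _ h => ⟨h.1.symm, h.2.symm⟩⟩
  loopless := ⟨fun _ h => h.2 rfl⟩

/-- Every 3-coloring of the edges of `K_{j x t}` yields a copy of `K_{1,2}` in color 0,
or of `P₄` in color 1, or of `nK₂` in color 2. -/
def Arrows3 (j t n : ℕ) : Prop :=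
  ∀ c : Sym2 (Fin j × Fin t) → Fin 3,
    Contains (colorClass (multiK j t) c 0) (pathGraph 3) ∨
    Contains (colorClass (multiK j t) c 1) (pathGraph 4) ∨
    Contains (colorClass (multiK j t) c 2) (stripe n)

/-- Every 2-coloring of the edges of `K_{j x t}` yields a copy of `nK₂` in color 0
or of `C₇` in color 1. -/
def ArrowsC7 (j t n : ℕ) : Prop :=
  ∀ c : Sym2 (Fin j × Fin t) → Fin 2,
    Contains (colorClass (multiK j t) c 0) (stripe n) ∨
    Contains (colorClass (multiK j t) c 1) (cycleGraph 7)

/-!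
Colour an edge of `K_{3×t}` with the second colour exactly when it meets the part `2`. The
first colour class is then `K_{t,t}` between parts `0` and `1`, in which every edge meets
part `0`, so a matching has at most `t` edges. The second colour class is bipartite (part `2`
against the rest), so it contains no odd cycle. Taking `t = n - 1` gives the colouring, and
the same colouring for any `t < n` shows that `K_{3×t}` does not arrow `(nK₂, C₇)`.
-/

section Contains

variable {α : Type*} {G : SimpleGraph α}

theorem Contains.le_card_of_isVertexCover {n : ℕ} (S : Finset α)
    (hS : ∀ ⦃a b⦄, G.Adj a b → a ∈ S ∨ b ∈ S) (h : Contains G (stripe n)) : n ≤ S.card := by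
  obtain ⟨f, hf_inj, hf_adj⟩ := h
  have hcover (i : Fin n) : ∃ e : Fin 2, f (i, e) ∈ S := by
    rcases hS (hf_adj (a := (i, 0)) (b := (i, 1)) ⟨rfl, Fin.zero_ne_one⟩) with h | h
    exacts [⟨0, h⟩, ⟨1, h⟩]
  choose e he using hcover
  have hinj : Function.Injective fun i : Fin n => (⟨f (i, e i), he i⟩ : S) := fun i j hij =>
    congrArg Prod.fst (hf_inj (Subtype.ext_iff.mp hij))
  simpa using Fintype.card_le_of_injective _ hinj

theorem Contains.colorable {β : Type*} {H : SimpleGraph β} {k : ℕ} (h : Contains G H)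
    (hG : G.Colorable k) : H.Colorable k :=
  let ⟨f, _, hf⟩ := h
  hG.of_hom ⟨f, fun hab => hf hab⟩

theorem not_contains_cycleGraph_of_colorable_two {m : ℕ} (hm : 2 ≤ m) (hodd : Odd m)
    (hG : G.Colorable 2) : ¬ Contains G (cycleGraph m) := fun h => by
  have := (h.colorable hG).chromaticNumber_le
  rw [chromaticNumber_cycleGraph_of_odd m hm hodd] at this
  exact absurd this (by decide)

end Contains

def coloringByPartTwo (t : ℕ) : Sym2 (Fin 3 × Fin t) → Fin 2 :=
  Sym2.lift ⟨fun a b => if a.1 = 2 ∨ b.1 = 2 then 1 else 0, fun a b => by simp only [or_comm]⟩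

section ColoringByPartTwo

variable {t : ℕ}

theorem colorClass_coloringByPartTwo_zero_adj {a b : Fin 3 × Fin t}
    (h : (colorClass (multiK 3 t) (coloringByPartTwo t) 0).Adj a b) :
    a.1 ≠ b.1 ∧ a.1 ≠ 2 ∧ b.1 ≠ 2 := by
  obtain ⟨hab, hc⟩ := h
  simp only [coloringByPartTwo, Sym2.lift_mk] at hc
  split_ifs at hc with h2
  · exact absurd hc (by decide)
  · push Not at h2
    exact ⟨hab, h2⟩

theorem colorClass_coloringByPartTwo_one_adj {a b : Fin 3 × Fin t}
    (h : (colorClass (multiK 3 t) (coloringByPartTwo t) 1).Adj a b) :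
    (a.1 = 2 ↔ b.1 ≠ 2) := by
  obtain ⟨hab, hc⟩ := h
  simp only [coloringByPartTwo, Sym2.lift_mk] at hc
  split_ifs at hc with h2
  · have : a.1 = 2 → b.1 ≠ 2 := fun ha hb => hab (ha.trans hb.symm)
    tauto
  · exact absurd hc (by decide)

theorem not_contains_stripe_colorClass_coloringByPartTwo_zero {n : ℕ} (ht : t < n) :
    ¬ Contains (colorClass (multiK 3 t) (coloringByPartTwo t) 0) (stripe n) := fun h => by
  set partZero : Finset (Fin 3 × Fin t) :=
    Finset.univ.map (Function.Embedding.sectR (0 : Fin 3) (Fin t))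
  have hmem {a : Fin 3 × Fin t} (ha : a.1 = 0) : a ∈ partZero :=
    Finset.mem_map.2 ⟨a.2, Finset.mem_univ _, Prod.ext ha.symm rfl⟩
  have hcover ⦃a b : Fin 3 × Fin t⦄
      (hab : (colorClass (multiK 3 t) (coloringByPartTwo t) 0).Adj a b) :
      a ∈ partZero ∨ b ∈ partZero := by
    obtain ⟨hne, ha, hb⟩ := colorClass_coloringByPartTwo_zero_adj hab
    have hpart : ∀ x y : Fin 3, x ≠ y → x ≠ 2 → y ≠ 2 → x = 0 ∨ y = 0 := by decide
    exact (hpart _ _ hne ha hb).imp hmem hmem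
  have := h.le_card_of_isVertexCover partZero hcover
  simp only [partZero, Finset.card_map, Finset.card_univ, Fintype.card_fin] at this
  omega

theorem colorable_colorClass_coloringByPartTwo_one :
    (colorClass (multiK 3 t) (coloringByPartTwo t) 1).Colorable 2 :=
  ⟨Coloring.mk (fun a => if a.1 = 2 then 0 else 1) fun hab => by
    have := colorClass_coloringByPartTwo_one_adj hab
    split_ifs <;> simp_all⟩

end ColoringByPartTwo

theorem stmt12 (n : ℕ) (hn : 3 ≤ n) :
    (∃ c : Sym2 (Fin 3 × Fin (n - 1)) → Fin 2,
      ¬ Contains (colorClass (multiK 3 (n - 1)) c 0) (stripe n) ∧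
      ¬ Contains (colorClass (multiK 3 (n - 1)) c 1) (cycleGraph 7)) ∧
    (∀ t : ℕ, 0 < t → ArrowsC7 3 t n → n ≤ t) := by
  have avoids (t : ℕ) (ht : t < n) :
      ¬ Contains (colorClass (multiK 3 t) (coloringByPartTwo t) 0) (stripe n) ∧
      ¬ Contains (colorClass (multiK 3 t) (coloringByPartTwo t) 1) (cycleGraph 7) :=
    ⟨not_contains_stripe_colorClass_coloringByPartTwo_zero ht,
      not_contains_cycleGraph_of_colorable_two (by norm_num) (by decide)
        colorable_colorClass_coloringByPartTwo_one⟩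
  refine ⟨⟨coloringByPartTwo (n - 1), avoids (n - 1) (by omega)⟩, fun t _ harr => ?_⟩
  by_contra! ht
  exact (harr (coloringByPartTwo t)).elim (avoids t ht).1 (avoids t ht).2
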